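/- For 0 < α ≤ 1, the function P_α(z) = ((1+z)/(1−z))^α = exp(α Log((1+z)/(1−z))) (principal branch), which is analytic on the unit disk 𝔻, has all Taylor coefficients about z = 0 nonnegative (indeed, real and ≥ 0). -/

import Mathlib

/-!
`P_α` solves `(1 - z²) P' = 2α P`. Differentiating this `n` times gives
`(1 - z²) P⁽ⁿ⁺¹⁾ = (2α + 2nz) P⁽ⁿ⁾ + n(n-1) P⁽ⁿ⁻¹⁾`, so at `z = 0` the derivatives satisfy
`aₙ₊₁ = 2α aₙ + n(n-1) aₙ₋₁` with `a₀ = 1`, and nonnegativity propagates along the recurrence.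
-/

open Complex Metric
open scoped ComplexOrder

section Recurrence

variable {𝕜 : Type*} [NontriviallyNormedField 𝕜] [CompleteSpace 𝕜]

theorem hasDerivAt_iteratedDeriv_of_analyticOnNhd {f : 𝕜 → 𝕜} {U : Set 𝕜}
    (hf : AnalyticOnNhd 𝕜 f U) (n : ℕ) {z : 𝕜} (hz : z ∈ U) :
    HasDerivAt (iteratedDeriv n f) (iteratedDeriv (n + 1) f z) z := by
  rw [iteratedDeriv_succ, iteratedDeriv_eq_iterate]
  exact (hf.iterated_deriv n z hz).differentiableAt.hasDerivAt

/-- At `n = 0` the truncated `n - 1` is harmless because its coefficient vanishes. -/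
theorem one_sub_sq_mul_iteratedDeriv_succ {f : 𝕜 → 𝕜} {U : Set 𝕜} {c : 𝕜} (hU : IsOpen U)
    (hf : AnalyticOnNhd 𝕜 f U) (hode : ∀ z ∈ U, (1 - z ^ 2) * deriv f z = c * f z) (n : ℕ) :
    ∀ z ∈ U, (1 - z ^ 2) * iteratedDeriv (n + 1) f z
      = (c + 2 * n * z) * iteratedDeriv n f z
        + ((n * (n - 1) : ℕ) : 𝕜) * iteratedDeriv (n - 1) f z := by
  induction n with
  | zero => simpa using hode
  | succ k ih =>
    intro z hz
    have hD := fun m => hasDerivAt_iteratedDeriv_of_analyticOnNhd hf m hz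
    have hL := ((hasDerivAt_pow 2 z).const_sub 1).mul (hD (k + 1))
    have hR := ((((hasDerivAt_id z).const_mul (2 * (k : 𝕜))).const_add c).mul (hD k)).add
      ((hD (k - 1)).const_mul ((k * (k - 1) : ℕ) : 𝕜))
    have hev : (fun w => (1 - w ^ 2) * iteratedDeriv (k + 1) f w) =ᶠ[nhds z]
        fun w => (c + 2 * k * w) * iteratedDeriv k f w
          + ((k * (k - 1) : ℕ) : 𝕜) * iteratedDeriv (k - 1) f w :=
      Filter.eventually_of_mem (hU.mem_nhds hz) ih
    have hderiv := hL.unique (hR.congr_of_eventuallyEq hev)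
    have hshift : ((k * (k - 1) : ℕ) : 𝕜) * iteratedDeriv (k - 1 + 1) f z
        = ((k * (k - 1) : ℕ) : 𝕜) * iteratedDeriv k f z := by
      cases k <;> simp
    simp only [id, Nat.add_sub_cancel, hshift] at hderiv ⊢
    rcases k with _ | k <;> push_cast at hderiv ⊢ <;> linear_combination hderiv

end Recurrence

theorem nonneg_of_recurrence {R : Type*} [Semiring R] [PartialOrder R] [IsOrderedRing R]
    {a : ℕ → R} {c : R} (hc : 0 ≤ c) (h0 : 0 ≤ a 0)
    (hrec : ∀ n, a (n + 1) = c * a n + ((n * (n - 1) : ℕ) : R) * a (n - 1)) (n : ℕ) :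
    0 ≤ a n := by
  induction n using Nat.strong_induction_on with
  | _ n ih =>
    rcases n with _ | n
    · exact h0
    · have := ih n (by omega)
      have := ih (n - 1) (by omega)
      rw [hrec]
      positivity

theorem one_sub_ne_zero_of_norm_lt_one {z : ℂ} (hz : ‖z‖ < 1) : 1 - z ≠ 0 :=
  sub_ne_zero.2 fun h => by simp [← h] at hz

-- `Re ((1 + z) / (1 - z)) = (1 - ‖z‖²) / ‖1 - z‖²`
theorem one_add_div_one_sub_mem_slitPlane {z : ℂ} (hz : ‖z‖ < 1) :
    (1 + z) / (1 - z) ∈ slitPlane := by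
  have hsq : normSq z < 1 := by
    rw [normSq_eq_norm_sq]
    nlinarith [norm_nonneg z]
  rw [normSq_apply] at hsq
  refine Or.inl ?_
  rw [div_re, ← add_div]
  refine div_pos ?_ (normSq_pos.2 (one_sub_ne_zero_of_norm_lt_one hz))
  simp only [add_re, one_re, sub_re, add_im, one_im, sub_im]
  nlinarith

noncomputable def Palpha (a : ℂ) (z : ℂ) : ℂ :=
  exp (a * log ((1 + z) / (1 - z)))

theorem Palpha_zero (a : ℂ) : Palpha a 0 = 1 := by
  simp [Palpha]

theorem analyticOnNhd_Palpha (a : ℂ) : AnalyticOnNhd ℂ (Palpha a) (ball 0 1) := by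
  intro z hz
  rw [mem_ball_zero_iff] at hz
  unfold Palpha
  fun_prop (disch := first
    | exact one_sub_ne_zero_of_norm_lt_one hz
    | exact one_add_div_one_sub_mem_slitPlane hz)

theorem one_sub_sq_mul_deriv_Palpha (a : ℂ) {z : ℂ} (hz : z ∈ ball (0 : ℂ) 1) :
    (1 - z ^ 2) * deriv (Palpha a) z = 2 * a * Palpha a z := by
  rw [mem_ball_zero_iff] at hz
  have h1 := one_sub_ne_zero_of_norm_lt_one hz
  have h2 := slitPlane_ne_zero (mem_slitPlane_of_norm_lt_one hz)
  have hw := ((hasDerivAt_id z).const_add 1).div ((hasDerivAt_id z).const_sub 1) h1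
  have hP : HasDerivAt (Palpha a) _ z :=
    ((hw.clog (one_add_div_one_sub_mem_slitPlane hz)).const_mul a).cexp
  rw [hP.deriv, Palpha]
  simp only [Pi.div_apply, id]
  field_simp
  ring

theorem iteratedDeriv_succ_Palpha_zero (a : ℂ) (n : ℕ) :
    iteratedDeriv (n + 1) (Palpha a) 0
      = 2 * a * iteratedDeriv n (Palpha a) 0
        + ((n * (n - 1) : ℕ) : ℂ) * iteratedDeriv (n - 1) (Palpha a) 0 := by
  simpa using one_sub_sq_mul_iteratedDeriv_succ isOpen_ball (analyticOnNhd_Palpha a)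
    (fun z hz => one_sub_sq_mul_deriv_Palpha a hz) n 0 (mem_ball_self one_pos)

theorem Palpha_coeff_nonneg_general (α : ℝ) (hα0 : 0 < α) (n : ℕ) :
    ∃ r : ℝ, 0 ≤ r ∧
      iteratedDeriv n
        (fun z : ℂ => Complex.exp ((α : ℂ) * Complex.log ((1 + z) / (1 - z)))) 0
        = (r : ℂ) := by
  have hc : (0 : ℂ) ≤ 2 * α := mul_nonneg zero_le_two (zero_le_real.2 hα0.le)
  have hnonneg := nonneg_of_recurrence (a := fun k => iteratedDeriv k (Palpha α) 0) hc
    (by simp [Palpha_zero]) (iteratedDeriv_succ_Palpha_zero α) n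
  obtain ⟨r, hr, h⟩ := RCLike.nonneg_iff_exists_ofReal.1 hnonneg
  exact ⟨r, hr, h.symm⟩

/-- For `0 < α ≤ 1`, the function `P_α(z) = ((1+z)/(1-z))^α` (principal branch) has all
Taylor coefficients about `0` real and nonnegative; equivalently, all iterated derivatives
at `0` are nonnegative reals. -/
theorem Palpha_coeff_nonneg (α : ℝ) (hα0 : 0 < α) (hα1 : α ≤ 1) (n : ℕ) :
    ∃ r : ℝ, 0 ≤ r ∧
      iteratedDeriv n
        (fun z : ℂ => Complex.exp ((α : ℂ) * Complex.log ((1 + z) / (1 - z)))) 0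
        = (r : ℂ) :=
  Palpha_coeff_nonneg_general α hα0 n
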